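/- Every weakly selective ideal on ω is weakly Ramsey. -/

import Mathlib

open Set

/-- `I` is an ideal on `α`: closed under subsets and finite unions,
contains all finite sets, and is not all of `P(α)`. -/
def IsIdealOn {α : Type*} (I : Set (Set α)) : Prop :=
  (∀ A ∈ I, ∀ B : Set α, B ⊆ A → B ∈ I) ∧
  (∀ A ∈ I, ∀ B ∈ I, A ∪ B ∈ I) ∧
  (∀ A : Set α, A.Finite → A ∈ I) ∧
  (Set.univ : Set α) ∉ I

/-- Generator of the first type of `WR`: a vertical line. -/
def WRgen1 (S : Set (ℕ × ℕ)) : Prop := ∃ i, S = {p : ℕ × ℕ | p.1 = i}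

/-- Generator of the second type of `WR`. -/
def WRgen2 (S : Set (ℕ × ℕ)) : Prop :=
  ∀ p ∈ S, ∀ q ∈ S, p ≠ q → p.1 > q.1 + q.2 ∨ q.1 > p.1 + p.2

/-- The ideal `WR`: sets covered by finitely many generators. -/
def WR : Set (Set (ℕ × ℕ)) :=
  {A | ∃ C : Finset (Set (ℕ × ℕ)), (∀ S ∈ C, WRgen1 S ∨ WRgen2 S) ∧ A ⊆ ⋃₀ ↑C}

/-- Generator of `ED↑`: a vertical line or the graph of a nondecreasing function. -/
def EDgen (S : Set (ℕ × ℕ)) : Prop :=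
  (∃ i, S = {p : ℕ × ℕ | p.1 = i}) ∨
  (∃ f : ℕ → ℕ, Monotone f ∧ S = {p : ℕ × ℕ | p.2 = f p.1})

/-- The ideal `ED↑`. -/
def EDup : Set (Set (ℕ × ℕ)) :=
  {A | ∃ C : Finset (Set (ℕ × ℕ)), (∀ S ∈ C, EDgen S) ∧ A ⊆ ⋃₀ ↑C}

/-- A tree of finite sequences: closed under taking prefixes. -/
def IsTree {α : Type*} (T : Set (List α)) : Prop :=
  ∀ s ∈ T, ∀ t : List α, t <+: s → t ∈ T

/-- `I` is weakly Ramsey: every (nonempty) tree all of whose ramifications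
belong to the dual filter `I*` has a branch with `I`-positive range. -/
def WeaklyRamsey {α : Type*} (I : Set (Set α)) : Prop :=
  ∀ T : Set (List α), ([] : List α) ∈ T → IsTree T →
    (∀ s ∈ T, {x : α | s ++ [x] ∈ T}ᶜ ∈ I) →
    ∃ b : ℕ → α, (∀ k, (List.range k).map b ∈ T) ∧ Set.range b ∉ I

/-- `(X n)` is a partition of `α`. -/
def IsPartition {α : Type*} (X : ℕ → Set α) : Prop :=
  (∀ m n, m ≠ n → Disjoint (X m) (X n)) ∧ (⋃ n, X n) = Set.univ

/-- `S` is a selector: it meets each piece in at most one point. -/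
def IsSelector {α : Type*} (X : ℕ → Set α) (S : Set α) : Prop :=
  ∀ n, (S ∩ X n).Subsingleton

/-- Locally selective: every partition into sets from `I` has an `I`-positive selector. -/
def LocallySelective {α : Type*} (I : Set (Set α)) : Prop :=
  ∀ X : ℕ → Set α, IsPartition X → (∀ n, X n ∈ I) →
    ∃ S : Set α, IsSelector X S ∧ S ∉ I

/-- Weakly selective. -/
def WeaklySelective {α : Type*} (I : Set (Set α)) : Prop :=
  ∀ X : ℕ → Set α, IsPartition X → {n | X n ∉ I}.Subsingleton →
    (∀ n, (⋃ m, ⋃ _ : n ≤ m, X m) ∉ I) →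
    ∃ S : Set α, IsSelector X S ∧ S ∉ I

/-!
The fusion set `fusionSet T n` consists of the `x > n` that extend every node of `T` whose
length and entries are at most `n`; its complement is in `I`, being a finite union of
complements of ramifications. Weak selectivity, applied to the partition of `ℕ` by depth in this decreasing
sequence, gives an `I`-positive set on which the depth is injective; applied once more, to a
partition into finite intervals, it thins this set so that every point lies in the fusion set of
each smaller point. The increasing enumeration of the result is a branch of `T`.
-/

namespace IsIdealOn

variable {α : Type*} {I : Set (Set α)} {A B C : Set α}

theorem mono (hI : IsIdealOn I) (hA : A ∈ I) (hBA : B ⊆ A) : B ∈ I := hI.1 A hA B hBA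

theorem union_mem (hI : IsIdealOn I) (hA : A ∈ I) (hB : B ∈ I) : A ∪ B ∈ I := hI.2.1 A hA B hB

theorem finite_mem (hI : IsIdealOn I) (hA : A.Finite) : A ∈ I := hI.2.2.1 A hA

theorem infinite_of_notMem (hI : IsIdealOn I) (hA : A ∉ I) : A.Infinite :=
  fun hfin => hA (hI.finite_mem hfin)

theorem notMem_of_subset_union (hI : IsIdealOn I) (hA : A ∉ I) (hC : C ∈ I) (h : A ⊆ B ∪ C) :
    B ∉ I :=
  fun hB => hA (hI.mono (hI.union_mem hB hC) h)

theorem notMem_of_compl_mem (hI : IsIdealOn I) (hA : Aᶜ ∈ I) : A ∉ I :=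
  hI.notMem_of_subset_union hI.2.2.2 hA (by simp)

theorem biUnion_mem (hI : IsIdealOn I) {ι : Type*} {s : Set ι} (hs : s.Finite) {f : ι → Set α}
    (hf : ∀ i ∈ s, f i ∈ I) : (⋃ i ∈ s, f i) ∈ I := by
  induction s, hs using Set.Finite.induction_on with
  | empty => simpa using hI.finite_mem finite_empty
  | insert _ _ ih =>
    rw [biUnion_insert]
    exact hI.union_mem (hf _ (mem_insert _ _)) (ih fun i hi => hf i (mem_insert_of_mem _ hi))

end IsIdealOn

theorem isPartition_fibers {α : Type*} (f : α → ℕ) : IsPartition fun n => f ⁻¹' {n} :=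
  ⟨fun _ _ hmn => (disjoint_singleton.2 hmn).preimage f,
    eq_univ_of_forall fun x => mem_iUnion.2 ⟨f x, rfl⟩⟩

theorem IsSelector.injOn_of_fibers {α : Type*} {f : α → ℕ} {S : Set α}
    (hS : IsSelector (fun n => f ⁻¹' {n}) S) : InjOn f S :=
  fun x hx _ hy hxy => hS (f x) ⟨hx, rfl⟩ ⟨hy, hxy.symm⟩

namespace WeaklySelective

variable {α : Type*} {I : Set (Set α)}

theorem exists_injOn (h : WeaklySelective I) (f : α → ℕ)
    (hfib : {n | f ⁻¹' {n} ∉ I}.Subsingleton) (htail : ∀ n, {x | n ≤ f x} ∉ I) :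
    ∃ S ∉ I, InjOn f S := by
  have htail' : ∀ n, (⋃ m, ⋃ _ : n ≤ m, f ⁻¹' {m}) ∉ I := fun n => by
    convert htail n using 2
    ext; simp
  obtain ⟨S, hS, hSI⟩ := h _ (isPartition_fibers f) hfib htail'
  exact ⟨S, hSI, hS.injOn_of_fibers⟩

/-- The partition used is `Zᶜ` together with the pieces `Z ∩ g ⁻¹' {n}`. -/
theorem exists_subset_injOn (hI : IsIdealOn I) (h : WeaklySelective I) {Z : Set α} {g : α → ℕ}
    (hZ : Z ∉ I) (hg : ∀ n, Z ∩ {x | g x ≤ n} ∈ I) : ∃ S ⊆ Z, S ∉ I ∧ InjOn g S := by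
  classical
  set f : α → ℕ := fun x => if x ∈ Z then g x + 1 else 0 with hf
  have hfib : {n | f ⁻¹' {n} ∉ I}.Subsingleton := by
    refine (subsingleton_singleton (a := 0)).anti fun n hn => ?_
    obtain _ | k := n
    · rfl
    · refine absurd (hI.mono (hg k) fun x hx => ?_) hn
      by_cases hxZ : x ∈ Z <;> simp_all
  have htail : ∀ n, {x | n ≤ f x} ∉ I := fun n =>
    hI.notMem_of_subset_union hZ (hg n) fun x hxZ => by
      by_cases hgx : g x ≤ n
      · exact Or.inr ⟨hxZ, hgx⟩
      · exact Or.inl (by simp only [hf, mem_ofPred_eq, if_pos hxZ]; omega)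
  obtain ⟨S, hSI, hSf⟩ := h.exists_injOn f hfib htail
  have hSZ : (S \ Z).Subsingleton := fun x hx y hy =>
    hSf hx.1 hy.1 (by simp [hf, hx.2, hy.2])
  refine ⟨S ∩ Z, inter_subset_right, ?_, fun x hx y hy hxy => hSf hx.1 hy.1 ?_⟩
  · exact hI.notMem_of_subset_union hSI (hI.finite_mem hSZ.finite) fun x hx => by
      by_cases hxZ : x ∈ Z
      exacts [Or.inl ⟨hx, hxZ⟩, Or.inr ⟨hx, hxZ⟩]
  · simp [hf, hx.2, hy.2, hxy]

end WeaklySelective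

theorem Antitone.exists_mem_iff_lt {α : Type*} {Y : ℕ → Set α} (hY : Antitone Y)
    (h : ∀ x, ∃ n, x ∉ Y n) : ∃ d : α → ℕ, ∀ x n, x ∈ Y n ↔ n < d x := by
  classical
  refine ⟨fun x => Nat.find (h x), fun x n =>
    ⟨fun hx => ?_, fun hn => not_not.1 (Nat.find_min (h x) hn)⟩⟩
  by_contra! hle
  exact Nat.find_spec (h x) (hY hle hx)

theorem StrictMono.exists_mem_Ico {M : ℕ → ℕ} (hM : StrictMono M) (h0 : M 0 = 0) (x : ℕ) :
    ∃ j, x ∈ Ico (M j) (M (j + 1)) := by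
  have hcover := iUnion_Ico_map_succ_eq_Ici (fun a => hM.monotone (Nat.zero_le a))
    hM.not_bddAbove_range_of_wellFoundedLT
  have hx : x ∈ ⋃ j, Ico (M j) (M (Order.succ j)) := by
    rw [hcover]
    simp [h0]
  simpa using hx

theorem exists_strictMono_le_apply_of_succ_le {S : Set ℕ} {g : ℕ → ℕ}
    (hg : ∀ n, (S ∩ {x | g x < n}).Finite) :
    ∃ M : ℕ → ℕ, StrictMono M ∧ M 0 = 0 ∧ ∀ j, ∀ y ∈ S, M (j + 1) ≤ y → M j ≤ g y := by
  choose B hB using fun n => (hg n).bddAbove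
  obtain ⟨M, hM0, hMsucc⟩ : ∃ M : ℕ → ℕ, M 0 = 0 ∧ ∀ j, M (j + 1) = max (M j + 1) (B (M j) + 1) :=
    ⟨fun j => Nat.rec (motive := fun _ => ℕ) 0 (fun _ m => max (m + 1) (B m + 1)) j, rfl,
      fun _ => rfl⟩
  refine ⟨M, strictMono_nat_of_lt_succ fun j => ?_, hM0, fun j y hy hMy => ?_⟩
  · rw [hMsucc]
    exact (Nat.lt_succ_self _).trans_le (le_max_left _ _)
  · by_contra! hlt
    have hyB : y ≤ B (M j) := hB (M j) ⟨hy, hlt⟩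
    have hBM : B (M j) + 1 ≤ M (j + 1) := hMsucc j ▸ le_max_right _ _
    omega

namespace WeaklySelective

variable {I : Set (Set ℕ)}

/-- Cut `ℕ` into intervals `[M j, M (j + 1))` such that `M j ≤ g y` for `y ∈ S` beyond `M (j + 1)`;
keeping at most one point per interval, and then only intervals of one parity, separates any two
points of `Z` by a whole interval. -/
theorem exists_subset_lt_apply (hI : IsIdealOn I) (h : WeaklySelective I) {S : Set ℕ}
    {g : ℕ → ℕ} (hS : S ∉ I) (hg : ∀ n, (S ∩ {x | g x < n}).Finite) :
    ∃ Z ⊆ S, Z ∉ I ∧ ∀ x ∈ Z, ∀ y ∈ Z, x < y → x < g y := by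
  obtain ⟨M, hM, hM0, hMg⟩ := exists_strictMono_le_apply_of_succ_le hg
  choose blk hblk using hM.exists_mem_Ico hM0
  obtain ⟨S', hS'S, hS', hinj⟩ := h.exists_subset_injOn hI hS fun n => hI.finite_mem <|
    (finite_Iio (M (n + 1))).subset fun x hx =>
      (hblk x).2.trans_le (hM.monotone (Nat.succ_le_succ hx.2))
  obtain ⟨r, hr⟩ : ∃ r, {x ∈ S' | blk x % 2 = r} ∉ I := by
    by_contra! hall
    refine hS' (hI.mono (hI.union_mem (hall 0) (hall 1)) fun x hx => ?_)
    rcases Nat.mod_two_eq_zero_or_one (blk x) with hx2 | hx2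
    exacts [Or.inl ⟨hx, hx2⟩, Or.inr ⟨hx, hx2⟩]
  refine ⟨_, fun x hx => hS'S hx.1, hr, fun x hx y hy hxy => ?_⟩
  have hle : blk x ≤ blk y := by
    by_contra! hlt
    have : M (blk y + 1) ≤ M (blk x) := hM.monotone hlt
    have := (hblk x).1
    have := (hblk y).2
    omega
  have hne : blk x ≠ blk y := fun he => hxy.ne (hinj hx.1 hy.1 he)
  have hgap : blk x + 2 ≤ blk y := by
    have := hx.2
    have := hy.2
    omega
  calc x < M (blk x + 1) := (hblk x).2
    _ ≤ g y := hMg (blk x + 1) y (hS'S hy.1) ((hM.monotone hgap).trans (hblk y).1)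

end WeaklySelective

theorem finite_setOf_length_le_forall_mem {α : Type*} {A : Set α} (hA : A.Finite) (n : ℕ) :
    {s : List α | s.length ≤ n ∧ ∀ a ∈ s, a ∈ A}.Finite := by
  have := hA.to_subtype
  refine ((List.finite_length_le A n).image (List.map Subtype.val)).subset ?_
  rintro s ⟨hlen, hs⟩
  lift s to List A using hs
  exact ⟨s, by simpa using hlen, rfl⟩

section Fusion

variable (T : Set (List ℕ))

def fusionSet (n : ℕ) : Set ℕ :=
  {x | n < x ∧ ∀ s ∈ T, s.length ≤ n → (∀ a ∈ s, a ≤ n) → s ++ [x] ∈ T}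

theorem fusionSet_antitone : Antitone (fusionSet T) := fun _ _ hmn _ hx =>
  ⟨hmn.trans_lt hx.1, fun s hs hlen hle =>
    hx.2 s hs (hlen.trans hmn) fun a ha => (hle a ha).trans hmn⟩

theorem notMem_fusionSet_self (x : ℕ) : x ∉ fusionSet T x := fun hx => hx.1.false

theorem compl_fusionSet_mem {I : Set (Set ℕ)} (hI : IsIdealOn I)
    (hT : ∀ s ∈ T, {x | s ++ [x] ∈ T}ᶜ ∈ I) (n : ℕ) : (fusionSet T n)ᶜ ∈ I := by
  have hsmall := (finite_setOf_length_le_forall_mem (finite_Iic n) n).inter_of_left T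
  refine hI.mono (hI.union_mem (hI.finite_mem (finite_Iic n))
    (hI.biUnion_mem hsmall fun s hs => hT s hs.2)) fun x hx => ?_
  simp only [fusionSet, mem_compl_iff, mem_ofPred_eq, not_and, not_forall] at hx
  by_cases hxn : n < x
  · obtain ⟨s, hs, hlen, hle, hsx⟩ := hx hxn
    exact Or.inr (mem_biUnion (x := s) ⟨⟨hlen, hle⟩, hs⟩ hsx)
  · exact Or.inl (not_lt.1 hxn)

theorem map_range_mem_of_mem_fusionSet (hnil : [] ∈ T) {b : ℕ → ℕ} (h0 : b 0 ∈ fusionSet T 0)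
    (hsucc : ∀ k, b (k + 1) ∈ fusionSet T (b k)) (k : ℕ) : (List.range k).map b ∈ T := by
  have hb : StrictMono b := strictMono_nat_of_lt_succ fun k => (hsucc k).1
  induction k with
  | zero => exact hnil
  | succ k ih =>
    rw [List.range_succ, List.map_append, List.map_singleton]
    obtain _ | j := k
    · exact h0.2 _ ih le_rfl (by simp)
    · refine (hsucc j).2 _ ih ?_ ?_
      · have := hb.add_le_nat j 0
        rw [add_zero] at this
        have := h0.1
        simp only [List.length_map, List.length_range]
        omega
      · simp only [List.mem_map, List.mem_range]
        rintro _ ⟨i, hi, rfl⟩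
        exact hb.monotone (Nat.le_of_lt_succ hi)

end Fusion

theorem weaklySelective_weaklyRamsey (I : Set (Set ℕ)) (hI : IsIdealOn I)
    (h : WeaklySelective I) : WeaklyRamsey I := by
  intro T hnil _ hT
  have hYc := compl_fusionSet_mem T hI hT
  obtain ⟨d, hd⟩ := (fusionSet_antitone T).exists_mem_iff_lt fun x =>
    ⟨x, notMem_fusionSet_self T x⟩
  obtain ⟨S, hSY, hS, hdS⟩ := h.exists_subset_injOn hI (hI.notMem_of_compl_mem (hYc 0)) fun n =>
    hI.mono (hYc n) fun x hx hxn => hx.2.not_gt ((hd x n).1 hxn)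
  have hdfin : ∀ n, (S ∩ {x | d x < n}).Finite := fun n =>
    ((finite_Iio n).subset (image_subset_iff.2 fun _ hx => hx.2)).of_finite_image
      (hdS.mono inter_subset_left)
  obtain ⟨Z, hZS, hZ, hZd⟩ := h.exists_subset_lt_apply hI hS hdfin
  have hZinf := hI.infinite_of_notMem hZ
  have hmem := Nat.nth_mem_of_infinite hZinf
  refine ⟨Nat.nth (· ∈ Z), map_range_mem_of_mem_fusionSet T hnil (hSY (hZS (hmem 0)))
    fun k => (hd _ _).2 (hZd _ (hmem k) _ (hmem (k + 1)) (Nat.nth_strictMono hZinf k.lt_succ_self)),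
    ?_⟩
  convert hZ using 2
  exact Nat.range_nth_of_infinite hZinf
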